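/- arXiv:2501.12563 — 3 statements merged into one kernel-verified Lean document; each statement's English description precedes it below -/
import Mathlib

section
/- Let G, U, V be groups and u : G → U, v : G → V be surjective group homomorphisms. Let N be the normal subgroup of the free product U * V generated by all elements of the form u(g) · v(g⁻¹) for g ∈ G. Then the quotient (U * V) / N is isomorphic to U / u(ker v) (note that u(ker v) is a normal subgroup of U). -/
open Monoid

/-- **Lemma (algebraic lemma).** Let `G, U, V` be groups and `u : G → U`, `v : G → V`
surjective homomorphisms. Let `N` be the normal closure in the free product `U ∗ V` of the
set of elements `inl (u g) * inr (v g)⁻¹` for `g ∈ G`. Then `(U ∗ V) / N ≅ U / u(ker v)`. -/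
theorem coprod_quot_normalClosure_mulEquiv_quot_map_ker
    {G U V : Type*} [Group G] [Group U] [Group V]
    (u : G →* U) (v : G →* V)
    (hu : Function.Surjective u) (hv : Function.Surjective v)
    (N : Subgroup (Coprod U V))
    (hN : N = Subgroup.normalClosure
      {z : Coprod U V | ∃ g : G, z = Coprod.inl (u g) * Coprod.inr (v g⁻¹)})
    [N.Normal] [(Subgroup.map u v.ker).Normal] :
    Nonempty ((Coprod U V ⧸ N) ≃* (U ⧸ Subgroup.map u v.ker)) := by
  set M := Subgroup.map u v.ker with hM
  -- ψ : V →* U ⧸ M sending v g to mk (u g)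
  have hker : v.ker ≤ ((QuotientGroup.mk' M).comp u).ker := by
    intro g hg
    simp only [MonoidHom.mem_ker, MonoidHom.comp_apply, QuotientGroup.mk'_apply,
      QuotientGroup.eq_one_iff]
    exact ⟨g, hg, rfl⟩
  let ψ : V →* U ⧸ M := v.liftOfSurjective hv ⟨(QuotientGroup.mk' M).comp u, hker⟩
  have hψ : ∀ g : G, ψ (v g) = QuotientGroup.mk' M (u g) := fun g =>
    v.liftOfRightInverse_comp_apply _ _ ⟨(QuotientGroup.mk' M).comp u, hker⟩ g
  let φ : Coprod U V →* U ⧸ M := Coprod.lift (QuotientGroup.mk' M) ψ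
  have hNφ : N ≤ φ.ker := by
    rw [hN]
    refine Subgroup.normalClosure_le_normal ?_
    rintro z ⟨g, rfl⟩
    simp only [SetLike.mem_coe, MonoidHom.mem_ker, map_mul, φ, Coprod.lift_apply_inl,
      Coprod.lift_apply_inr, hψ, map_inv, QuotientGroup.mk'_apply]
    simp
  let φ' : Coprod U V ⧸ N →* U ⧸ M := QuotientGroup.lift N φ hNφ
  -- θ' : U ⧸ M →* Coprod U V ⧸ N
  have hMθ : M ≤ ((QuotientGroup.mk' N).comp Coprod.inl).ker := by
    rintro x ⟨g, hg, rfl⟩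
    have hg1 : v g = 1 := hg
    simp only [MonoidHom.mem_ker, MonoidHom.comp_apply, QuotientGroup.mk'_apply,
      QuotientGroup.eq_one_iff]
    have : (Coprod.inl (u g) : Coprod U V) = Coprod.inl (u g) * Coprod.inr (v g⁻¹) := by
      simp [map_inv, hg1]
    rw [this, hN]
    exact Subgroup.subset_normalClosure ⟨g, rfl⟩
  let θ' : U ⧸ M →* Coprod U V ⧸ N :=
    QuotientGroup.lift M ((QuotientGroup.mk' N).comp Coprod.inl) hMθ
  refine ⟨MulEquiv.mk ⟨φ', θ', ?_, ?_⟩ (map_mul φ')⟩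
  · -- left inverse : θ' ∘ φ' = id
    have : θ'.comp φ' = MonoidHom.id _ := by
      apply QuotientGroup.monoidHom_ext
      apply Coprod.hom_ext
      · ext x
        show θ' (QuotientGroup.lift N φ hNφ ((Coprod.inl x : Coprod U V) : Coprod U V ⧸ N))
          = ((Coprod.inl x : Coprod U V) : Coprod U V ⧸ N)
        rw [QuotientGroup.lift_mk']
        show θ' (φ (Coprod.inl x)) = _
        have : φ (Coprod.inl x) = QuotientGroup.mk' M x := Coprod.lift_apply_inl _ _ _
        rw [this]
        rfl
      · ext y
        obtain ⟨g, rfl⟩ := hv y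
        show θ' (QuotientGroup.lift N φ hNφ ((Coprod.inr (v g) : Coprod U V) : Coprod U V ⧸ N))
          = ((Coprod.inr (v g) : Coprod U V) : Coprod U V ⧸ N)
        rw [QuotientGroup.lift_mk']
        show θ' (φ (Coprod.inr (v g))) = _
        have h2 : φ (Coprod.inr (v g)) = QuotientGroup.mk' M (u g) := by
          rw [show φ (Coprod.inr (v g)) = ψ (v g) from Coprod.lift_apply_inr _ _ _, hψ]
        rw [h2]
        show ((Coprod.inl (u g) : Coprod U V) : Coprod U V ⧸ N)
          = ((Coprod.inr (v g) : Coprod U V) : Coprod U V ⧸ N)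
        rw [QuotientGroup.eq]
        have heq : (Coprod.inl (u g) : Coprod U V)⁻¹ * Coprod.inr (v g) =
            (Coprod.inl (u g))⁻¹ * (Coprod.inl (u g) * Coprod.inr (v g⁻¹))⁻¹ *
              Coprod.inl (u g) := by
          simp only [map_inv, mul_inv_rev, inv_inv]
          group
        rw [heq, hN]
        have hgen : (Coprod.inl (u g) * Coprod.inr (v g⁻¹) : Coprod U V) ∈
            Subgroup.normalClosure {z : Coprod U V | ∃ g : G,
              z = Coprod.inl (u g) * Coprod.inr (v g⁻¹)} :=
          Subgroup.subset_normalClosure ⟨g, rfl⟩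
        exact Subgroup.normalClosure_normal.conj_mem' _ (Subgroup.inv_mem _ hgen) _
    exact fun x => DFunLike.congr_fun this x
  · have : φ'.comp θ' = MonoidHom.id _ := by
      apply QuotientGroup.monoidHom_ext
      ext x
      show φ' (θ' ((x : U ⧸ M))) = _
      show φ' ((Coprod.inl x : Coprod U V) : Coprod U V ⧸ N) = _
      show φ (Coprod.inl x) = _
      rw [show φ (Coprod.inl x) = QuotientGroup.mk' M x from Coprod.lift_apply_inl _ _ _]
      rfl
    exact fun x => DFunLike.congr_fun this x
end

section
/- In the fundamental group of the Klein bottle, presented as ⟨a, b | a b a b⁻¹ = 1⟩ (equivalently b a b⁻¹ = a⁻¹), every cyclic normal subgroup is either trivial, equal to ⟨aᵏ⟩ for some positive integer k, or equal to ⟨b^{2k}⟩ for some positive integer k. -/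
/-- The Klein bottle group `⟨a, b | b a b⁻¹ = a⁻¹⟩`, i.e. `⟨a, b | b a b⁻¹ a = 1⟩`. -/
def kleinRels : Set (FreeGroup (Fin 2)) :=
  {FreeGroup.of 1 * FreeGroup.of 0 * (FreeGroup.of 1)⁻¹ * FreeGroup.of 0}

/-- The fundamental group of the Klein bottle. -/
abbrev KleinBottleGroup : Type := PresentedGroup kleinRels

/-- The generator `a` of the Klein bottle group. -/
def kleinA : KleinBottleGroup := PresentedGroup.of 0

/-- The generator `b` of the Klein bottle group. -/
def kleinB : KleinBottleGroup := PresentedGroup.of 1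

/-
The Klein bottle group is `ℤ ⋊ ℤ`, with `b` acting on `⟨a⟩ ≅ ℤ` by negation; every element
is `a ^ l * b ^ n` for unique `l, n`. If `⟨x⟩` is normal and `n ≠ 0`, write `g x g⁻¹ = x ^ j`:
projecting to the `b`-coordinate gives `j n = n`, so `j = 1` and `x` is central. Commuting with
`b` forces `l = 0` and commuting with `a` forces `n` to be even. If `n = 0`, then `x = a ^ l`.
-/

open Multiplicative SemidirectProduct Subgroup

theorem Subgroup.mem_center_of_normal_zpowers {G H : Type*} [Group G] [CommGroup H]
    [IsMulTorsionFree H] (f : G →* H) {x : G} (hfx : f x ≠ 1) (hx : (zpowers x).Normal) :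
    x ∈ center G := by
  refine mem_center_iff.mpr fun g => ?_
  obtain ⟨j, hj⟩ := mem_zpowers_iff.mp (hx.conj_mem x (mem_zpowers x) g)
  have hfj : f x ^ (j - 1) = 1 := by
    rw [zpow_sub, zpow_one, ← map_zpow, hj, map_mul, map_mul, map_inv, mul_right_comm,
      mul_inv_cancel_right, mul_inv_cancel]
  have hj1 : j = 1 := by
    have := (IsMulTorsionFree.zpow_eq_one_iff_right hfx).mp hfj
    omega
  rwa [hj1, zpow_one, eq_comm, mul_inv_eq_iff_eq_mul] at hj

theorem Subgroup.zpowers_zpow_eq_bot_or_exists_pos_pow {G : Type*} [Group G] (g : G) (z : ℤ) :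
    zpowers (g ^ z) = ⊥ ∨ ∃ k : ℕ, 0 < k ∧ zpowers (g ^ z) = zpowers (g ^ k) := by
  obtain rfl | hz := eq_or_ne z 0
  · simp
  refine .inr ⟨z.natAbs, Int.natAbs_pos.mpr hz, ?_⟩
  rcases Int.natAbs_eq z with h | h
  · conv_lhs => rw [h, zpow_natCast]
  · conv_lhs => rw [h, zpow_neg, zpow_natCast, zpowers_inv]

def kleinAction : Multiplicative ℤ →* MulAut (Multiplicative ℤ) :=
  zpowersHom _ (MulEquiv.inv _)

abbrev KleinModel : Type := Multiplicative ℤ ⋊[kleinAction] Multiplicative ℤ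

lemma kleinAction_two_mul (k : ℤ) : kleinAction (ofAdd (2 * k)) = 1 := by
  have : MulEquiv.inv (Multiplicative ℤ) ^ 2 = 1 := by ext; simp [sq]
  rw [kleinAction, zpowersHom_apply, toAdd_ofAdd, zpow_mul, zpow_ofNat, this, one_zpow]

lemma kleinAction_ofAdd_one : kleinAction (ofAdd 1) = MulEquiv.inv _ := by
  rw [kleinAction, zpowersHom_apply, toAdd_ofAdd, zpow_one]

lemma kleinAction_two_mul_add_one (k : ℤ) :
    kleinAction (ofAdd (2 * k + 1)) = MulEquiv.inv _ := by
  rw [ofAdd_add, map_mul, kleinAction_two_mul, one_mul, kleinAction_ofAdd_one]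

lemma kleinB_mul_kleinA_mul_inv : kleinB * kleinA * kleinB⁻¹ = kleinA⁻¹ := by
  have h := PresentedGroup.one_of_mem (rels := kleinRels) rfl
  simp only [map_mul, map_inv] at h
  exact mul_eq_one_iff_eq_inv.mp h

lemma commute_kleinA_kleinB_sq : Commute kleinA (kleinB ^ 2) := by
  have h : kleinB ^ 2 * kleinA * (kleinB ^ 2)⁻¹ = kleinA := by
    calc kleinB ^ 2 * kleinA * (kleinB ^ 2)⁻¹
        = kleinB * (kleinB * kleinA * kleinB⁻¹) * kleinB⁻¹ := by rw [sq]; group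
      _ = kleinB * kleinA⁻¹ * kleinB⁻¹ := by rw [kleinB_mul_kleinA_mul_inv]
      _ = (kleinB * kleinA * kleinB⁻¹)⁻¹ := by group
      _ = kleinA := by rw [kleinB_mul_kleinA_mul_inv, inv_inv]
  exact (mul_inv_eq_iff_eq_mul.mp h).symm

lemma kleinB_zpow_mul_kleinA_mul_inv (n : ℤ) :
    kleinB ^ n * kleinA * (kleinB ^ n)⁻¹ = kleinA ^ toAdd (kleinAction (ofAdd n) (ofAdd 1)) := by
  obtain ⟨k, rfl | rfl⟩ := Int.even_or_odd' n
  · rw [kleinAction_two_mul, zpow_mul, zpow_ofNat,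
      ← (commute_kleinA_kleinB_sq.zpow_right k).eq, mul_inv_cancel_right]
    simp
  · have hc := (commute_kleinA_kleinB_sq.zpow_right k).inv_left
    calc kleinB ^ (2 * k + 1) * kleinA * (kleinB ^ (2 * k + 1))⁻¹
        = (kleinB ^ 2) ^ k * (kleinB * kleinA * kleinB⁻¹) * ((kleinB ^ 2) ^ k)⁻¹ := by
          rw [zpow_add_one, zpow_mul, zpow_ofNat]; group
      _ = kleinA⁻¹ := by rw [kleinB_mul_kleinA_mul_inv, ← hc.eq, mul_inv_cancel_right]
      _ = _ := by rw [kleinAction_two_mul_add_one]; simp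

def kleinBottleGroupEquiv : KleinBottleGroup ≃* KleinModel :=
  MonoidHom.toMulEquiv
    (PresentedGroup.toGroup (f := ![inl (ofAdd 1), inr (ofAdd 1)]) fun r hr => by
      rw [kleinRels, Set.mem_singleton_iff] at hr
      subst hr
      ext <;> simp [kleinAction] <;> rfl)
    (SemidirectProduct.lift (zpowersHom _ kleinA) (zpowersHom _ kleinB) fun n =>
      MonoidHom.ext_mint <| by
        simp only [MonoidHom.comp_apply, MulEquiv.coe_toMonoidHom, zpowersHom_apply,
          MulAut.conj_apply, toAdd_ofAdd, zpow_one]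
        exact (kleinB_zpow_mul_kleinA_mul_inv (toAdd n)).symm)
    (PresentedGroup.ext fun i => by fin_cases i <;> simp [kleinA, kleinB])
    (SemidirectProduct.hom_ext (MonoidHom.ext_mint (by simp [kleinA]))
      (MonoidHom.ext_mint (by simp [kleinB])))

lemma kleinBottleGroupEquiv_kleinA_zpow (l : ℤ) :
    kleinBottleGroupEquiv (kleinA ^ l) = inl (ofAdd l) := by
  have h : kleinBottleGroupEquiv kleinA = inl (ofAdd 1) := by
    simp [kleinBottleGroupEquiv, kleinA, PresentedGroup.toGroup.of]
  rw [map_zpow, h, ← map_zpow, ← ofAdd_zsmul, smul_eq_mul, mul_one]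

lemma kleinBottleGroupEquiv_kleinB_zpow (n : ℤ) :
    kleinBottleGroupEquiv (kleinB ^ n) = inr (ofAdd n) := by
  have h : kleinBottleGroupEquiv kleinB = inr (ofAdd 1) := by
    simp [kleinBottleGroupEquiv, kleinB, PresentedGroup.toGroup.of]
  rw [map_zpow, h, ← map_zpow, ← ofAdd_zsmul, smul_eq_mul, mul_one]

lemma KleinModel.exists_eq_inr_of_mem_center {g : KleinModel} (hg : g ∈ Set.center KleinModel) :
    ∃ m : ℤ, g = inr (ofAdd (2 * m)) := by
  have hb := congrArg SemidirectProduct.left (Semigroup.mem_center_iff.mp hg (inr (ofAdd 1)))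
  have ha := congrArg SemidirectProduct.left (Semigroup.mem_center_iff.mp hg (inl (ofAdd 1)))
  simp only [mul_left, left_inr, right_inr, left_inl, right_inl, map_one, MulAut.one_apply,
    one_mul, mul_one] at ha hb
  have hleft : g.left = 1 := by
    rwa [kleinAction_ofAdd_one, MulEquiv.inv_apply, inv_eq_iff_eq_inv, eq_inv_iff_mul_eq_one,
      ← sq, sq_eq_one] at hb
  obtain ⟨m, hm | hm⟩ := Int.even_or_odd' (toAdd g.right)
  · exact ⟨m, SemidirectProduct.ext hleft (by simp [← hm])⟩
  · rw [hleft, ← ofAdd_toAdd g.right, hm, kleinAction_two_mul_add_one] at ha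
    exact absurd (congrArg toAdd ha) (by simp)

lemma eq_kleinA_zpow_or_kleinB_zpow_two_mul_of_normal {x : KleinBottleGroup}
    (hx : (zpowers x).Normal) : (∃ l : ℤ, x = kleinA ^ l) ∨ ∃ m : ℤ, x = kleinB ^ (2 * m) := by
  set e := kleinBottleGroupEquiv
  by_cases hright : (e x).right = 1
  · refine .inl ⟨toAdd (e x).left, e.injective ?_⟩
    rw [kleinBottleGroupEquiv_kleinA_zpow]
    exact SemidirectProduct.ext rfl hright
  · have hcenter : x ∈ center KleinBottleGroup :=
      mem_center_of_normal_zpowers (rightHom.comp e.toMonoidHom) hright hx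
    obtain ⟨m, hm⟩ :=
      KleinModel.exists_eq_inr_of_mem_center (MulEquivClass.apply_mem_center e hcenter)
    exact .inr ⟨m, e.injective (by rw [hm, kleinBottleGroupEquiv_kleinB_zpow])⟩

/-- Every cyclic normal subgroup of the Klein bottle group is trivial, equal to `⟨aᵏ⟩`
for some positive `k`, or equal to `⟨b^(2k)⟩` for some positive `k`. -/
theorem cyclic_normal_subgroup_of_kleinBottleGroup
    (N : Subgroup KleinBottleGroup) (hnormal : N.Normal)
    (hcyclic : ∃ x : KleinBottleGroup, N = Subgroup.zpowers x) :
    N = ⊥ ∨ (∃ k : ℕ, 0 < k ∧ N = Subgroup.zpowers (kleinA ^ k)) ∨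
      (∃ k : ℕ, 0 < k ∧ N = Subgroup.zpowers (kleinB ^ (2 * k))) := by
  obtain ⟨x, rfl⟩ := hcyclic
  rcases eq_kleinA_zpow_or_kleinB_zpow_two_mul_of_normal hnormal with ⟨l, rfl⟩ | ⟨m, rfl⟩
  · rcases zpowers_zpow_eq_bot_or_exists_pos_pow kleinA l with h | h
    exacts [.inl h, .inr (.inl h)]
  · rw [zpow_mul, zpow_ofNat]
    rcases zpowers_zpow_eq_bot_or_exists_pos_pow (kleinB ^ 2) m with h | ⟨k, hk, h⟩
    · exact .inl h
    · exact .inr (.inr ⟨k, hk, by rw [h, pow_mul]⟩)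
end

section
/- Let X be a topological space decomposed as X = A₁ ∪ A₂ with A₁, A₂, and A₁ ∩ A₂ open and path-connected, and suppose the inclusion-induced maps j_k : π₁(A₁ ∩ A₂) → π₁(A_k) are both surjective (k = 1, 2). Then π₁(X) is isomorphic to π₁(A₁) / j₁(ker j₂). -/
open CategoryTheory FundamentalGroupoid
open scoped FundamentalGroupoid unitInterval

/-- The homomorphism on fundamental groups induced by a continuous map. -/
noncomputable def FundamentalGroup.inducedHom {E B : Type} [TopologicalSpace E]
    [TopologicalSpace B] (p : C(E, B)) (e : E) :
    FundamentalGroup E e →* FundamentalGroup B (p e) :=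
  CategoryTheory.Functor.mapEnd (FundamentalGroupoid.mk e)
    (show FundamentalGroupoid E ⥤ FundamentalGroupoid B from
      πₘ (show TopCat.of E ⟶ TopCat.of B from TopCat.ofHom p))

/-!
A loop in `X` is cut, by a Lebesgue number argument, into pieces each lying in `A₁` or in `A₂`.
Joining the subdivision points to `x₀` by paths inside the sets containing them (inside `A₁ ∩ A₂`
when possible) writes the loop as a product of loops in `A₁` and in `A₂`. Since `j₂` is onto,
loops in `A₂` come from `A₁ ∩ A₂`, hence from `A₁`, so `π₁(A₁) → π₁(X)` is onto.

For the kernel, let `K = ker j₁ ⊔ ker j₂`. As the `jₖ` are onto, the projection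
`π₁(A₁ ∩ A₂) → π₁(A₁ ∩ A₂) / K` factors as `ψₖ ∘ jₖ`, and it suffices to see that `ψ₁` kills
every loop of `A₁` that is null-homotopic in `X`. Closing up a path lying in `Aₖ` by the
connecting paths and applying `ψₖ` labels it by an element of `π₁(A₁ ∩ A₂) / K`; the labels of
`A₁` and `A₂` agree on `A₁ ∩ A₂`, and they are multiplicative and homotopy invariant inside each
`Aₖ`. Cutting a null-homotopy into small squares, each mapped into `A₁` or `A₂`, every square
relates the labels of its four edges, and telescoping row by row shows that the loop has the
label of the constant loop, which is `1`.
-/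

open Function Set

/-- `revProd f n = f (n - 1) * ⋯ * f 0`: the order in which the fundamental group composes
consecutive pieces of a path, `[p.trans q] = [q] * [p]`. -/
def revProd {G : Type*} [Monoid G] (f : ℕ → G) : ℕ → G
  | 0 => 1
  | n + 1 => f n * revProd f n

section revProd

variable {G : Type*}

@[simp] lemma revProd_zero [Monoid G] (f : ℕ → G) : revProd f 0 = 1 := rfl

@[simp] lemma revProd_succ [Monoid G] (f : ℕ → G) (n : ℕ) :
    revProd f (n + 1) = f n * revProd f n := rfl

@[simp] lemma revProd_one [Monoid G] (n : ℕ) : revProd (fun _ => (1 : G)) n = 1 := by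
  induction n with
  | zero => rfl
  | succ n ih => simp [ih]

lemma revProd_mem [Group G] {H : Subgroup G} {f : ℕ → G} (hf : ∀ m, f m ∈ H) (n : ℕ) :
    revProd f n ∈ H := by
  induction n with
  | zero => exact H.one_mem
  | succ n ih => exact H.mul_mem (hf n) ih

lemma revProd_conj [Group G] {E E' V : ℕ → G} (h : ∀ m, V (m + 1) * E m = E' m * V m)
    (n : ℕ) : V n * revProd E n = revProd E' n * V 0 := by
  induction n with
  | zero => simp
  | succ n ih => rw [revProd_succ, revProd_succ, ← mul_assoc, h, mul_assoc, ih, mul_assoc]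

end revProd

/-- `hker` is what the universal property of the pushout `U ←u– H –v→ V` says about its leg `φ`;
the conclusion is the isomorphism `(U * V) / N ≅ U / u(ker v)` for surjective `u` and `v`. -/
theorem MonoidHom.ker_eq_map_ker_of_forall_comp_eq {H U V Γ : Type*} [Group H] [Group U]
    [Group V] [Group Γ] {u : H →* U} {v : H →* V} (hu : Surjective u) (hv : Surjective v)
    {φ : U →* Γ} {φ' : V →* Γ} (hφ : φ.comp u = φ'.comp v)
    (hker : ∀ (ψ : U →* H ⧸ (u.ker ⊔ v.ker)) (ψ' : V →* H ⧸ (u.ker ⊔ v.ker)),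
      ψ.comp u = ψ'.comp v → φ.ker ≤ ψ.ker) :
    φ.ker = v.ker.map u := by
  set K := u.ker ⊔ v.ker
  refine le_antisymm (fun a ha => ?_) ?_
  · obtain ⟨h, rfl⟩ := hu a
    let ψ := u.liftOfSurjective hu ⟨QuotientGroup.mk' K, by simp [K]⟩
    let ψ' := v.liftOfSurjective hv ⟨QuotientGroup.mk' K, by simp [K]⟩
    have hh : h ∈ K := by
      simpa [ψ] using hker ψ ψ' (by simp only [ψ, ψ', liftOfRightInverse_comp]) ha
    simpa [K, Subgroup.map_sup] using Subgroup.mem_map_of_mem u hh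
  · rintro _ ⟨h, hh, rfl⟩
    rw [mem_ker, ← comp_apply, hφ, comp_apply, hh, map_one]

namespace Path

variable {X : Type*} [TopologicalSpace X] {x y z : X} {S : Set X}

def codRestrict (γ : Path x y) (h : ∀ t, γ t ∈ S) :
    Path (⟨x, γ.source ▸ h 0⟩ : S) ⟨y, γ.target ▸ h 1⟩ where
  toFun t := ⟨γ t, h t⟩
  continuous_toFun := by fun_prop
  source' := Subtype.ext γ.source
  target' := Subtype.ext γ.target

@[simp] lemma coe_codRestrict_apply (γ : Path x y) (h : ∀ t, γ t ∈ S) (t : I) :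
    (γ.codRestrict h t : X) = γ t := rfl

@[simp] lemma subpath_apply (γ : Path x y) (a b t : I) :
    γ.subpath a b t = γ (Set.Icc.convexComb a b t) := rfl

lemma trans_mem {γ : Path x y} {δ : Path y z} (hγ : ∀ t, γ t ∈ S) (hδ : ∀ t, δ t ∈ S) (t : I) :
    γ.trans δ t ∈ S := by
  rw [trans_apply]
  split_ifs
  exacts [hγ _, hδ _]

lemma codRestrict_trans {γ : Path x y} {δ : Path y z} (hγ : ∀ t, γ t ∈ S) (hδ : ∀ t, δ t ∈ S)
    (h : ∀ t, γ.trans δ t ∈ S) :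
    (γ.trans δ).codRestrict h = (γ.codRestrict hγ).trans (δ.codRestrict hδ) := by
  ext t
  simp only [coe_codRestrict_apply, trans_apply]
  split_ifs <;> rfl

lemma codRestrict_subpath (γ : Path x y) (hγ : ∀ t, γ t ∈ S) (a b : I)
    (h : ∀ t, γ.subpath a b t ∈ S) :
    (γ.subpath a b).codRestrict h = (γ.codRestrict hγ).subpath a b := rfl

end Path

lemma IsSimplyConnected.homotopic_codRestrict_map {X Y : Type*} [TopologicalSpace X]
    [TopologicalSpace Y] {B : Set Y} (hB : IsSimplyConnected B) {f : Y → X} (hf : Continuous f)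
    {S : Set X} (hfS : MapsTo f B S) {a b : Y} {p q : Path a b} (hp : ∀ t, p t ∈ B)
    (hq : ∀ t, q t ∈ B) :
    ((p.map hf).codRestrict fun t => hfS (hp t)).Homotopic
      ((q.map hf).codRestrict fun t => hfS (hq t)) := by
  have := hB.simplyConnectedSpace
  exact (SimplyConnectedSpace.paths_homotopic (p.codRestrict hp) (q.codRestrict hq)).map
    ⟨hfS.restrict, hf.restrict hfS⟩

namespace unitInterval

def segmentSnd (a c d : I) : Path (a, c) (a, d) := (Path.refl a).prod (Path.id.subpath c d)

def segmentFst (c a b : I) : Path (a, c) (b, c) := (Path.id.subpath a b).prod (Path.refl c)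

@[simp] lemma segmentSnd_apply (a c d t : I) :
    segmentSnd a c d t = (a, Set.Icc.convexComb c d t) := rfl

@[simp] lemma segmentFst_apply (c a b t : I) :
    segmentFst c a b t = (Set.Icc.convexComb a b t, c) := rfl

lemma convexComb_mem_Icc {a b : I} (hab : a ≤ b) (s : I) :
    Set.Icc.convexComb a b s ∈ Icc a b :=
  ⟨Set.Icc.le_convexComb hab s, Set.Icc.convexComb_le hab s⟩

lemma segmentSnd_mem {a c d : I} {s : Set I} (ha : a ∈ s) (hcd : c ≤ d) (t : I) :
    segmentSnd a c d t ∈ s ×ˢ Icc c d :=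
  ⟨ha, convexComb_mem_Icc hcd t⟩

lemma segmentFst_mem {c a b : I} {s : Set I} (hc : c ∈ s) (hab : a ≤ b) (t : I) :
    segmentFst c a b t ∈ Icc a b ×ˢ s :=
  ⟨convexComb_mem_Icc hab t, hc⟩

lemma isSimplyConnected_Icc_prod_Icc {a b c d : I} (hab : a ≤ b) (hcd : c ≤ d) :
    IsSimplyConnected (Icc a b ×ˢ Icc c d) := by
  have he : Topology.IsEmbedding (Prod.map (Subtype.val : I → ℝ) (Subtype.val : I → ℝ)) :=
    Topology.IsEmbedding.subtypeVal.prodMap Topology.IsEmbedding.subtypeVal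
  rw [← he.isSimplyConnected_image, Set.prodMap_image_prod, Set.image_subtype_val_Icc,
    Set.image_subtype_val_Icc]
  have hconv := (convex_Icc (𝕜 := ℝ) (a : ℝ) b).prod (convex_Icc (𝕜 := ℝ) (c : ℝ) d)
  have := hconv.contractibleSpace ⟨((a : ℝ), (c : ℝ)), ⟨le_rfl, hab⟩, ⟨le_rfl, hcd⟩⟩
  exact inferInstanceAs (SimplyConnectedSpace _)

end unitInterval

namespace CategoryTheory.Groupoid

variable {C : Type*} [Groupoid C] {o : C} (κ : ∀ z, o ⟶ z)

def conjLoop {z z' : C} (f : z ⟶ z') : End o := κ z ≫ f ≫ inv (κ z')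

lemma conjLoop_comp {z z' z'' : C} (f : z ⟶ z') (g : z' ⟶ z'') :
    conjLoop κ (f ≫ g) = conjLoop κ g * conjLoop κ f := by
  simp [conjLoop, End.mul_def]

lemma conjLoop_of_eq_id (hκ : κ o = 𝟙 o) (f : End o) : conjLoop κ f = f := by
  simp [conjLoop, hκ]

lemma mapEnd_conjLoop {D : Type*} [Groupoid D] (F : C ⥤ D) (κ' : ∀ z, F.obj o ⟶ z)
    (hκ : ∀ z, F.map (κ z) = κ' (F.obj z)) {z z' : C} (f : z ⟶ z') :
    F.mapEnd o (conjLoop κ f) = conjLoop κ' (F.map f) := by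
  simp [conjLoop, hκ]

end CategoryTheory.Groupoid

section PathLabel

variable {X : Type*} [TopologicalSpace X] {G : Type*} [Group G]

lemma Path.label_congr {β : Type*} (lab : ∀ {z z' : X}, Path z z' → β) {z z' y y' : X}
    {p : Path z z'} {q : Path y y'} (h : ∀ t, p t = q t) : lab p = lab q := by
  obtain rfl : z = y := by simpa using h 0
  obtain rfl : z' = y' := by simpa using h 1
  rw [Path.ext (funext h)]

structure IsPathLabelOn (lab : ∀ {z z' : X}, Path z z' → G) (S : Set X) : Prop where
  trans {z z' z'' : X} (p : Path z z') (q : Path z' z'') :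
    (∀ t, p t ∈ S) → (∀ t, q t ∈ S) → lab (p.trans q) = lab q * lab p
  homotopic {z z' : X} {p q : Path z z'} (hp : ∀ t, p t ∈ S) (hq : ∀ t, q t ∈ S) :
    (p.codRestrict hp).Homotopic (q.codRestrict hq) → lab p = lab q

open Classical in
noncomputable def Path.piecewiseLabel (S : Set X) (lab₁ lab₂ : ∀ {z z' : X}, Path z z' → G)
    {z z' : X} (p : Path z z') : G :=
  if ∀ t, p t ∈ S then lab₁ p else lab₂ p

namespace IsPathLabelOn

variable {lab : ∀ {z z' : X}, Path z z' → G} {S : Set X}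

lemma apply_refl (hlab : IsPathLabelOn lab S) {z : X} (hz : z ∈ S) :
    lab (Path.refl z) = 1 := by
  have := hlab.trans (Path.refl z) (Path.refl z) (fun _ => hz) (fun _ => hz)
  rwa [Path.refl_trans_refl, left_eq_mul] at this

lemma congr {lab' : ∀ {z z' : X}, Path z z' → G} (hlab : IsPathLabelOn lab S)
    (h : ∀ {z z' : X} (p : Path z z'), (∀ t, p t ∈ S) → lab' p = lab p) :
    IsPathLabelOn lab' S where
  trans p q hp hq := by
    rw [h _ hp, h _ hq, h _ (Path.trans_mem hp hq), hlab.trans p q hp hq]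
  homotopic hp hq hpq := by rw [h _ hp, h _ hq, hlab.homotopic hp hq hpq]

lemma piecewiseLabel_left {lab₂ : ∀ {z z' : X}, Path z z' → G} (hlab : IsPathLabelOn lab S) :
    IsPathLabelOn (Path.piecewiseLabel S lab lab₂) S :=
  hlab.congr fun _ hp => if_pos hp

lemma piecewiseLabel_right {lab₁ : ∀ {z z' : X}, Path z z' → G} {T : Set X}
    (hlab : IsPathLabelOn lab T)
    (h : ∀ {z z' : X} (p : Path z z'), (∀ t, p t ∈ S) → (∀ t, p t ∈ T) → lab₁ p = lab p) :
    IsPathLabelOn (Path.piecewiseLabel S lab₁ lab) T :=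
  hlab.congr fun p hp => by
    unfold Path.piecewiseLabel
    split_ifs with hpS
    exacts [h p hpS hp, rfl]

lemma eq_revProd_subpath (hlab : IsPathLabelOn lab S) {x y : X} {γ : Path x y}
    (hγ : ∀ t, γ t ∈ S) {t : ℕ → I} {N : ℕ} (h0 : t 0 = 0) (hN : t N = 1) :
    lab γ = revProd (fun m => lab (γ.subpath (t m) (t (m + 1)))) N := by
  have hsub : ∀ a b s, γ.subpath a b s ∈ S := fun _ _ _ => hγ _
  have key : ∀ n, lab (γ.subpath (t 0) (t n)) =
      revProd (fun m => lab (γ.subpath (t m) (t (m + 1)))) n := by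
    intro n
    induction n with
    | zero => rw [Path.subpath_self, revProd_zero, hlab.apply_refl (hγ _)]
    | succ n ih =>
      rw [revProd_succ, ← ih, ← hlab.trans _ _ (hsub _ _) (hsub _ _)]
      refine hlab.homotopic (hsub _ _) (Path.trans_mem (hsub _ _) (hsub _ _)) ?_
      rw [Path.codRestrict_trans (hsub _ _) (hsub _ _), Path.codRestrict_subpath _ hγ,
        Path.codRestrict_subpath _ hγ, Path.codRestrict_subpath _ hγ]
      exact ⟨(Path.Homotopy.subpathTransSubpath _ _ _ _).symm⟩
  rw [← key, h0, hN]
  exact Path.label_congr lab fun s => by simp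

open unitInterval in
lemma square (hlab : IsPathLabelOn lab S) {f : I × I → X} (hf : Continuous f) {a b c d : I}
    (hab : a ≤ b) (hcd : c ≤ d) (hfS : MapsTo f (Icc a b ×ˢ Icc c d) S) :
    lab ((segmentFst d a b).map hf) * lab ((segmentSnd a c d).map hf) =
      lab ((segmentSnd b c d).map hf) * lab ((segmentFst c a b).map hf) := by
  have hB := segmentSnd_mem (left_mem_Icc.2 hab) hcd
  have hR := segmentFst_mem (right_mem_Icc.2 hcd) hab
  have hL := segmentFst_mem (left_mem_Icc.2 hcd) hab
  have hT := segmentSnd_mem (right_mem_Icc.2 hab) hcd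
  rw [← hlab.trans _ _ (fun t => hfS (hB t)) (fun t => hfS (hR t)),
    ← hlab.trans _ _ (fun t => hfS (hL t)) (fun t => hfS (hT t)), ← Path.map_trans,
    ← Path.map_trans]
  exact hlab.homotopic _ _ ((isSimplyConnected_Icc_prod_Icc hab hcd).homotopic_codRestrict_map
    hf hfS (Path.trans_mem hB hR) (Path.trans_mem hL hT))

end IsPathLabelOn

open unitInterval in
theorem exists_revProd_subpath_eq_of_homotopy {lab : ∀ {z z' : X}, Path z z' → G} {ι : Type*}
    {U : ι → Set X} (hU : ∀ i, IsOpen (U i)) (hcover : ⋃ i, U i = univ)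
    (hlab : ∀ i, IsPathLabelOn lab (U i)) {x y : X} {γ₀ γ₁ : Path x y} (F : γ₀.Homotopy γ₁) :
    ∃ (t : ℕ → I) (N : ℕ), t 0 = 0 ∧ t N = 1 ∧
      revProd (fun m => lab (γ₀.subpath (t m) (t (m + 1)))) N =
        revProd (fun m => lab (γ₁.subpath (t m) (t (m + 1)))) N := by
  obtain ⟨t, ht0, hmono, ⟨N, htN⟩, hsq⟩ :=
    exists_monotone_Icc_subset_open_cover_unitInterval_prod_self
      (fun i => (hU i).preimage F.continuous) (by simp [← preimage_iUnion, hcover])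
  choose k hk using hsq
  have hrefl : ∀ z, lab (Path.refl z) = 1 := fun z => by
    obtain ⟨i, hi⟩ := mem_iUnion.1 (hcover ▸ mem_univ z)
    exact (hlab i).apply_refl hi
  set E : ℕ → ℕ → G := fun n m => lab ((segmentSnd (t n) (t m) (t (m + 1))).map F.continuous)
  set V : ℕ → ℕ → G := fun n m => lab ((segmentFst (t m) (t n) (t (n + 1))).map F.continuous)
  -- Row `n` and row `n + 1` of the grid are related by the squares between them, and the two
  -- side edges of that strip are constant paths.
  have hrow : ∀ n, revProd (E n) N = revProd (E (n + 1)) N := fun n => by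
    have hV0 : V n 0 = 1 :=
      (Path.label_congr lab fun s => by simp [ht0, F.source]).trans (hrefl x)
    have hVN : V n N = 1 :=
      (Path.label_congr lab fun s => by simp [htN N le_rfl, F.target]).trans (hrefl y)
    simpa [hV0, hVN] using revProd_conj (E := E n) (E' := E (n + 1)) (V := V n)
      (fun m => (hlab (k n m)).square F.continuous (hmono n.le_succ) (hmono m.le_succ)
        (hk n m)) N
  have hE0 : E 0 = fun m => lab (γ₀.subpath (t m) (t (m + 1))) :=
    funext fun m => Path.label_congr lab fun s => by simp [ht0]
  have hEN : E N = fun m => lab (γ₁.subpath (t m) (t (m + 1))) :=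
    funext fun m => Path.label_congr lab fun s => by simp [htN N le_rfl]
  have hrows : ∀ n, revProd (E 0) N = revProd (E n) N := fun n =>
    Nat.rec rfl (fun n ih => ih.trans (hrow n)) n
  exact ⟨t, N, ht0, htN N le_rfl, hE0 ▸ hEN ▸ hrows N⟩

end PathLabel

section LabelIn

variable {X : Type*} [TopologicalSpace X] {S : Set X} {o : FundamentalGroupoid S}
  (κ : ∀ z, o ⟶ z) {G : Type*} [Group G] (ψ : End o →* G)

/-- Paths not lying in `S` get the junk label `1`. -/
noncomputable def labelIn {z z' : X} (p : Path z z') : G :=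
  open Classical in
  if hp : ∀ t, p t ∈ S then ψ (Groupoid.conjLoop κ (fromPath ⟦p.codRestrict hp⟧)) else 1

lemma labelIn_of_mem {z z' : X} {p : Path z z'} (hp : ∀ t, p t ∈ S) :
    labelIn κ ψ p = ψ (Groupoid.conjLoop κ (fromPath ⟦p.codRestrict hp⟧)) :=
  dif_pos hp

lemma labelIn_mem_range {z z' : X} (p : Path z z') : labelIn κ ψ p ∈ ψ.range := by
  unfold labelIn
  split_ifs
  exacts [⟨_, rfl⟩, one_mem _]

lemma isPathLabelOn_labelIn : IsPathLabelOn (labelIn κ ψ) S where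
  trans p q hp hq := by
    rw [labelIn_of_mem κ ψ hp, labelIn_of_mem κ ψ hq, labelIn_of_mem κ ψ (Path.trans_mem hp hq),
      Path.codRestrict_trans hp hq, ← map_mul, ← Groupoid.conjLoop_comp]
    rfl
  homotopic hp hq hpq := by
    rw [labelIn_of_mem κ ψ hp, labelIn_of_mem κ ψ hq, Quotient.sound hpq]

end LabelIn

section ConnectingArrow

variable {X : Type*} [TopologicalSpace X] {x₀ : X} (c : ∀ z, Path x₀ z) {S T : Set X}

def connectingArrow (hc : ∀ z ∈ S, ∀ t, c z t ∈ S) (hx₀ : x₀ ∈ S) (z : FundamentalGroupoid S) :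
    FundamentalGroupoid.mk (⟨x₀, hx₀⟩ : S) ⟶ z :=
  fromPath ⟦(c z.as).codRestrict (hc _ z.as.2)⟧

lemma connectingArrow_self (hc₀ : c x₀ = Path.refl x₀) (hc : ∀ z ∈ S, ∀ t, c z t ∈ S)
    (hx₀ : x₀ ∈ S) : connectingArrow c hc hx₀ (FundamentalGroupoid.mk ⟨x₀, hx₀⟩) = 𝟙 _ := by
  change fromPath ⟦(c x₀).codRestrict _⟧ = fromPath ⟦Path.refl (⟨x₀, hx₀⟩ : S)⟧
  congr 2
  ext t
  simp [hc₀]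

variable {G : Type*} [Group G]

lemma labelIn_loop (hc₀ : c x₀ = Path.refl x₀) (hc : ∀ z ∈ S, ∀ t, c z t ∈ S) (hx₀ : x₀ ∈ S)
    (ψ : FundamentalGroup S ⟨x₀, hx₀⟩ →* G) {γ : Path x₀ x₀} (hγ : ∀ t, γ t ∈ S) :
    labelIn (connectingArrow c hc hx₀) ψ γ = ψ ⟦γ.codRestrict hγ⟧ := by
  rw [labelIn_of_mem _ _ hγ, Groupoid.conjLoop_of_eq_id _ (connectingArrow_self c hc₀ hc hx₀)]

lemma labelIn_of_subset (hST : S ⊆ T) (hcS : ∀ z ∈ S, ∀ t, c z t ∈ S)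
    (hcT : ∀ z ∈ T, ∀ t, c z t ∈ T) (hx₀ : x₀ ∈ S)
    (ψ : FundamentalGroup T ⟨x₀, hST hx₀⟩ →* G) {z z' : X} {p : Path z z'}
    (hp : ∀ t, p t ∈ S) :
    labelIn (connectingArrow c hcT (hST hx₀)) ψ p =
      labelIn (connectingArrow c hcS hx₀)
        (ψ.comp (FundamentalGroup.map ⟨inclusion hST, continuous_inclusion hST⟩ _)) p := by
  rw [labelIn_of_mem _ _ hp, labelIn_of_mem _ _ fun t => hST (hp t), MonoidHom.comp_apply]
  exact congrArg ψ (Groupoid.mapEnd_conjLoop (connectingArrow c hcS hx₀)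
    (FundamentalGroupoid.map ⟨inclusion hST, continuous_inclusion hST⟩)
    (connectingArrow c hcT (hST hx₀)) (fun _ => rfl) (fromPath ⟦p.codRestrict hp⟧)).symm

end ConnectingArrow

section VanKampen

variable {X : Type*} [TopologicalSpace X] {A₁ A₂ : Set X} {x₀ : X}

lemma exists_connecting_paths (hcover : A₁ ∪ A₂ = univ) (h₁ : IsPathConnected A₁)
    (h₂ : IsPathConnected A₂) (h₁₂ : IsPathConnected (A₁ ∩ A₂)) (hx₀ : x₀ ∈ A₁ ∩ A₂) :
    ∃ c : ∀ z, Path x₀ z, c x₀ = Path.refl x₀ ∧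
      (∀ z ∈ A₁, ∀ t, c z t ∈ A₁) ∧ (∀ z ∈ A₂, ∀ t, c z t ∈ A₂) := by
  have key : ∀ z, ∃ p : Path x₀ z, (z = x₀ → ∀ t, p t = x₀) ∧
      (z ∈ A₁ → ∀ t, p t ∈ A₁) ∧ (z ∈ A₂ → ∀ t, p t ∈ A₂) := by
    intro z
    by_cases hz : z = x₀
    · subst hz
      exact ⟨Path.refl z, fun _ _ => rfl, fun _ _ => hx₀.1, fun _ _ => hx₀.2⟩
    by_cases hz₁ : z ∈ A₁ <;> by_cases hz₂ : z ∈ A₂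
    · have h := h₁₂.joinedIn x₀ hx₀ z ⟨hz₁, hz₂⟩
      exact ⟨h.somePath, fun h' => absurd h' hz, fun _ t => (h.somePath_mem t).1,
        fun _ t => (h.somePath_mem t).2⟩
    · have h := h₁.joinedIn x₀ hx₀.1 z hz₁
      exact ⟨h.somePath, fun h' => absurd h' hz, fun _ => h.somePath_mem,
        fun h' => absurd h' hz₂⟩
    · have h := h₂.joinedIn x₀ hx₀.2 z hz₂
      exact ⟨h.somePath, fun h' => absurd h' hz, fun h' => absurd h' hz₁,
        fun _ => h.somePath_mem⟩
    · exact absurd (hcover.symm ▸ mem_univ z : z ∈ A₁ ∪ A₂) (not_or.2 ⟨hz₁, hz₂⟩)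
  choose c hc using key
  exact ⟨c, Path.ext (funext ((hc x₀).1 rfl)), fun z hz => (hc z).2.1 hz,
    fun z hz => (hc z).2.2 hz⟩

lemma FundamentalGroup.map_subtypeVal_comp_map_inclusion {S T : Set X} (hST : S ⊆ T) {x : X}
    (hx : x ∈ S) :
    (FundamentalGroup.map ⟨Subtype.val, continuous_subtype_val⟩ (⟨x, hST hx⟩ : T)).comp
      (FundamentalGroup.map ⟨inclusion hST, continuous_inclusion hST⟩ ⟨x, hx⟩) =
      FundamentalGroup.map ⟨Subtype.val, continuous_subtype_val⟩ (⟨x, hx⟩ : S) :=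
  MonoidHom.ext fun γ => Quotient.inductionOn γ fun _ => rfl

theorem FundamentalGroup.sup_range_map_subtypeVal_eq_top (hA₁ : IsOpen A₁) (hA₂ : IsOpen A₂)
    (hcover : A₁ ∪ A₂ = univ) (h₁ : IsPathConnected A₁) (h₂ : IsPathConnected A₂)
    (h₁₂ : IsPathConnected (A₁ ∩ A₂)) (hx₀ : x₀ ∈ A₁ ∩ A₂) :
    (FundamentalGroup.map ⟨Subtype.val, continuous_subtype_val⟩ (⟨x₀, hx₀.1⟩ : A₁)).range ⊔
      (FundamentalGroup.map ⟨Subtype.val, continuous_subtype_val⟩ (⟨x₀, hx₀.2⟩ : A₂)).range =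
      ⊤ := by
  obtain ⟨c, hc₀, hc₁, hc₂⟩ := exists_connecting_paths hcover h₁ h₂ h₁₂ hx₀
  have hc : ∀ z ∈ (univ : Set X), ∀ t, c z t ∈ univ := fun _ _ _ => trivial
  set ψ := FundamentalGroup.map ⟨Subtype.val, continuous_subtype_val⟩ (⟨x₀, mem_univ x₀⟩ : univ)
  have hpiece : ∀ {S : Set X} (hS : ∀ z ∈ S, ∀ t, c z t ∈ S) (hx : x₀ ∈ S) {z z' : X}
      {p : Path z z'}, (∀ t, p t ∈ S) → labelIn (connectingArrow c hc (mem_univ x₀)) ψ p ∈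
        (FundamentalGroup.map ⟨Subtype.val, continuous_subtype_val⟩ (⟨x₀, hx⟩ : S)).range :=
    fun {S} hS hx _ _ p hp => by
      have hrange := congrArg MonoidHom.range
        (FundamentalGroup.map_subtypeVal_comp_map_inclusion (subset_univ S) hx)
      rw [labelIn_of_subset c (subset_univ _) hS hc hx ψ hp]
      exact hrange ▸ labelIn_mem_range _ _ p
  rw [eq_top_iff]
  rintro g -
  obtain ⟨γ, rfl⟩ := Path.Homotopic.Quotient.mk_surjective g
  obtain ⟨t, ht0, hmono, ⟨N, htN⟩, ht⟩ :=
    exists_monotone_Icc_subset_open_cover_unitInterval (c := fun b => γ ⁻¹' cond b A₁ A₂)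
      (fun b => by cases b <;> exact IsOpen.preimage γ.continuous ‹_›)
      (by simp [← preimage_iUnion, ← union_eq_iUnion, hcover])
  choose k hk using ht
  have hγ := (isPathLabelOn_labelIn (connectingArrow c hc (mem_univ x₀)) ψ).eq_revProd_subpath
    (γ := γ) (fun _ => trivial) ht0 (htN N le_rfl)
  rw [labelIn_loop c hc₀ hc _ ψ fun _ => trivial] at hγ
  rw [show Path.Homotopic.Quotient.mk γ = _ from hγ]
  refine revProd_mem (fun m => ?_) N
  have hm : ∀ s, γ.subpath (t m) (t (m + 1)) s ∈ cond (k m) A₁ A₂ :=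
    fun s => hk m (unitInterval.convexComb_mem_Icc (hmono m.le_succ) s)
  cases hkm : k m <;> rw [hkm] at hm
  exacts [Subgroup.mem_sup_right (hpiece hc₂ hx₀.2 hm), Subgroup.mem_sup_left (hpiece hc₁ hx₀.1 hm)]

theorem FundamentalGroup.ker_map_subtypeVal_le_ker (hA₁ : IsOpen A₁) (hA₂ : IsOpen A₂)
    (hcover : A₁ ∪ A₂ = univ) (h₁ : IsPathConnected A₁) (h₂ : IsPathConnected A₂)
    (h₁₂ : IsPathConnected (A₁ ∩ A₂)) (hx₀ : x₀ ∈ A₁ ∩ A₂) {G : Type*} [Group G]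
    (ψ₁ : FundamentalGroup A₁ ⟨x₀, hx₀.1⟩ →* G) (ψ₂ : FundamentalGroup A₂ ⟨x₀, hx₀.2⟩ →* G)
    (hψ : ψ₁.comp (FundamentalGroup.map ⟨inclusion inter_subset_left,
        continuous_inclusion inter_subset_left⟩ ⟨x₀, hx₀⟩) =
      ψ₂.comp (FundamentalGroup.map ⟨inclusion inter_subset_right,
        continuous_inclusion inter_subset_right⟩ ⟨x₀, hx₀⟩)) :
    (FundamentalGroup.map ⟨Subtype.val, continuous_subtype_val⟩ (⟨x₀, hx₀.1⟩ : A₁)).ker ≤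
      ψ₁.ker := by
  obtain ⟨c, hc₀, hc₁, hc₂⟩ := exists_connecting_paths hcover h₁ h₂ h₁₂ hx₀
  have hc₁₂ : ∀ z ∈ A₁ ∩ A₂, ∀ t, c z t ∈ A₁ ∩ A₂ := fun z hz t => ⟨hc₁ z hz.1 t, hc₂ z hz.2 t⟩
  set lab : ∀ {z z' : X}, Path z z' → G := Path.piecewiseLabel A₁
    (labelIn (connectingArrow c hc₁ hx₀.1) ψ₁) (labelIn (connectingArrow c hc₂ hx₀.2) ψ₂)
  have hlab₁ : IsPathLabelOn lab A₁ := (isPathLabelOn_labelIn _ _).piecewiseLabel_left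
  have hlab₂ : IsPathLabelOn lab A₂ :=
    (isPathLabelOn_labelIn _ _).piecewiseLabel_right fun p hp₁ hp₂ => by
      rw [labelIn_of_subset c inter_subset_left hc₁₂ hc₁ hx₀ ψ₁ fun t => ⟨hp₁ t, hp₂ t⟩,
        labelIn_of_subset c inter_subset_right hc₁₂ hc₂ hx₀ ψ₂ fun t => ⟨hp₁ t, hp₂ t⟩, hψ]
  intro w hw
  obtain ⟨γ, rfl⟩ := Path.Homotopic.Quotient.mk_surjective w
  obtain ⟨F⟩ : (γ.map continuous_subtype_val).Homotopic (Path.refl x₀) :=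
    Path.Homotopic.Quotient.exact hw
  obtain ⟨t, N, ht0, htN, hF⟩ := exists_revProd_subpath_eq_of_homotopy
    (U := fun b => cond b A₁ A₂) (fun b => by cases b <;> assumption)
    (by rw [← union_eq_iUnion, hcover]) (fun b => by cases b <;> assumption) F
  have hγ : ∀ t, γ.map continuous_subtype_val t ∈ A₁ := fun t => (γ t).2
  have hrefl : ∀ m, lab ((Path.refl x₀).subpath (t m) (t (m + 1))) = 1 := fun m =>
    (Path.label_congr lab fun _ => rfl).trans (hlab₁.apply_refl hx₀.1)
  calc ψ₁ (Path.Homotopic.Quotient.mk γ)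
      _ = labelIn (connectingArrow c hc₁ hx₀.1) ψ₁ (γ.map continuous_subtype_val) :=
        (labelIn_loop c hc₀ hc₁ hx₀.1 ψ₁ hγ).symm
      _ = lab (γ.map continuous_subtype_val) := (if_pos hγ).symm
      _ = 1 := by
        rw [hlab₁.eq_revProd_subpath hγ ht0 htN, hF]
        simp only [hrefl, revProd_one]

end VanKampen

/-- **Seifert–van Kampen with surjective edge maps.**  If `X = A₁ ∪ A₂` with `A₁`, `A₂` and
`A₁ ∩ A₂` open and path-connected, and both inclusion-induced maps
`jₖ : π₁(A₁ ∩ A₂) → π₁(Aₖ)` are surjective, then `π₁(X) ≅ π₁(A₁) / j₁(ker j₂)`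
(expressed as: there is a surjective homomorphism `π₁(A₁) → π₁(X)` with kernel
`j₁(ker j₂)`). -/
theorem pi1_of_union_eq_quot
    {X : Type} [TopologicalSpace X] (A₁ A₂ : Set X)
    (h₁ : IsOpen A₁) (h₂ : IsOpen A₂) (hunion : A₁ ∪ A₂ = Set.univ)
    [PathConnectedSpace A₁] [PathConnectedSpace A₂]
    [PathConnectedSpace (A₁ ∩ A₂ : Set X)]
    (x₀ : X) (hx₀ : x₀ ∈ A₁ ∩ A₂)
    (j₁ : FundamentalGroup (A₁ ∩ A₂ : Set X) ⟨x₀, hx₀⟩ →*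
      FundamentalGroup A₁ ⟨x₀, hx₀.1⟩)
    (j₂ : FundamentalGroup (A₁ ∩ A₂ : Set X) ⟨x₀, hx₀⟩ →*
      FundamentalGroup A₂ ⟨x₀, hx₀.2⟩)
    (hj₁ : j₁ = FundamentalGroup.inducedHom
      ⟨Set.inclusion Set.inter_subset_left, continuous_inclusion Set.inter_subset_left⟩
      ⟨x₀, hx₀⟩)
    (hj₂ : j₂ = FundamentalGroup.inducedHom
      ⟨Set.inclusion Set.inter_subset_right, continuous_inclusion Set.inter_subset_right⟩
      ⟨x₀, hx₀⟩)
    (hsurj₁ : Function.Surjective j₁) (hsurj₂ : Function.Surjective j₂) :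
    ∃ Φ : FundamentalGroup A₁ ⟨x₀, hx₀.1⟩ →* FundamentalGroup X x₀,
      Function.Surjective Φ ∧ Φ.ker = Subgroup.map j₁ j₂.ker := by
  subst hj₁ hj₂
  have hA₁ := isPathConnected_iff_pathConnectedSpace.2 ‹PathConnectedSpace A₁›
  have hA₂ := isPathConnected_iff_pathConnectedSpace.2 ‹PathConnectedSpace A₂›
  have hA₁₂ := isPathConnected_iff_pathConnectedSpace.2 ‹PathConnectedSpace (A₁ ∩ A₂ : Set X)›
  set Φ := FundamentalGroup.map ⟨Subtype.val, continuous_subtype_val⟩ (⟨x₀, hx₀.1⟩ : A₁)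
  set Ψ := FundamentalGroup.map ⟨Subtype.val, continuous_subtype_val⟩ (⟨x₀, hx₀.2⟩ : A₂)
  have hcomm :=
    (FundamentalGroup.map_subtypeVal_comp_map_inclusion inter_subset_left hx₀).trans
      (FundamentalGroup.map_subtypeVal_comp_map_inclusion inter_subset_right hx₀).symm
  have hΨ : Ψ.range ≤ Φ.range := by
    rintro _ ⟨g, rfl⟩
    obtain ⟨u, rfl⟩ := hsurj₂ g
    exact ⟨_, DFunLike.congr_fun hcomm u⟩
  refine ⟨Φ, MonoidHom.range_eq_top.1 ?_, MonoidHom.ker_eq_map_ker_of_forall_comp_eq hsurj₁ hsurj₂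
    hcomm fun ψ ψ' h => ?_⟩
  · rw [← sup_eq_left.2 hΨ]
    exact FundamentalGroup.sup_range_map_subtypeVal_eq_top h₁ h₂ hunion hA₁ hA₂ hA₁₂ hx₀
  · exact FundamentalGroup.ker_map_subtypeVal_le_ker h₁ h₂ hunion hA₁ hA₂ hA₁₂ hx₀ ψ ψ' h
end
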